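/- (Angle bound (34) in the proof of Theorem 4.) Let n > r ≥ r* ≥ 1 be integers and τ ∈ (0,1). Let X₁ ∈ ℝ^{r×r}, and let X̂ ∈ ℝ^{n×r} be the block matrix with top block X₁ and bottom block 0. Let Z₁ ∈ ℝ^{r×r*}, Z₂ ∈ ℝ^{(n−r)×r*}, let Z ∈ ℝ^{n×r} have first r* columns given by stacking Z₁ over Z₂ and remaining columns zero, and set M* = ZZᵀ with rank(M*) = r*. Assume X̂X̂ᵀ ≠ ZZᵀ and ‖X̂X̂ᵀ − M*‖_F ≤ τ·λ_{r*}(M*). Then ‖Z₂Z₂ᵀ‖_F² / (‖Z₁Z₁ᵀ − X₁X₁ᵀ‖_F² + 2‖Z₁Z₂ᵀ‖_F² + ‖Z₂Z₂ᵀ‖_F²) ≤ τ/(2−τ) ≤ τ. -/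

import Mathlib

open scoped BigOperators
open Matrix

noncomputable section

/-- Euclidean norm of a real vector indexed by `Fin k`. -/
def enorm {k : ℕ} (v : Fin k → ℝ) : ℝ := Real.sqrt (∑ i, (v i) ^ 2)

/-- Frobenius norm of a real matrix. -/
def fnorm {a b : ℕ} (M : Matrix (Fin a) (Fin b) ℝ) : ℝ :=
  Real.sqrt (∑ i, ∑ j, (M i j) ^ 2)

/-- Frobenius inner product of two real matrices. -/
def finner {a b : ℕ} (M N : Matrix (Fin a) (Fin b) ℝ) : ℝ := ∑ i, ∑ j, M i j * N i j

open Classical in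
/-- The `i`-th largest eigenvalue (`0`-indexed, i.e. `eigval M 0` is the largest
eigenvalue and `eigval M ⟨k-1,_⟩` the smallest) of a real symmetric matrix
(junk value `0` if the matrix is not symmetric). -/
def eigval {k : ℕ} (M : Matrix (Fin k) (Fin k) ℝ) (i : Fin k) : ℝ :=
  if h : M.IsHermitian then
    h.eigenvalues (Tuple.sort h.eigenvalues ⟨k - 1 - i.val, by have := i.isLt; omega⟩)
  else 0

/-- Spectral norm of a real matrix: `√(λ₁(XᵀX))`. -/
def specNorm {a b : ℕ} (X : Matrix (Fin a) (Fin b) ℝ) : ℝ :=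
  if hb : 0 < b then Real.sqrt (eigval (Xᵀ * X) ⟨0, hb⟩) else 0

/-- Smallest singular value `σ_b(X)` of `X ∈ ℝ^{a×b}`: the square root of the
smallest eigenvalue of `XᵀX`. -/
def sigmaMin {a b : ℕ} (X : Matrix (Fin a) (Fin b) ℝ) : ℝ :=
  if hb : 0 < b then Real.sqrt (eigval (Xᵀ * X) ⟨b - 1, by omega⟩) else 0

/-- Vectorization of a square matrix. -/
def vecSq {n : ℕ} (M : Matrix (Fin n) (Fin n) ℝ) : Fin (n * n) → ℝ :=
  fun k => M (finProdFinEquiv.symm k).1 (finProdFinEquiv.symm k).2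

/-- Vectorization of an `n × r` matrix. -/
def vecR {n r : ℕ} (U : Matrix (Fin n) (Fin r) ℝ) : Fin (n * r) → ℝ :=
  fun k => U (finProdFinEquiv.symm k).1 (finProdFinEquiv.symm k).2

/-- `mat_S(v) = (V + Vᵀ)/2` where `vec V = v`. -/
def matS {n : ℕ} (v : Fin (n * n) → ℝ) : Matrix (Fin n) (Fin n) ℝ :=
  (1 / 2 : ℝ) • ((Matrix.of fun i j => v (finProdFinEquiv (i, j))) +
    (Matrix.of fun i j => v (finProdFinEquiv (i, j)))ᵀ)

/-- The sensing operator `𝒜(M) = (⟨A₁,M⟩, …, ⟨A_m,M⟩)`. -/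
def calA {n m : ℕ} (A : Fin m → Matrix (Fin n) (Fin n) ℝ)
    (M : Matrix (Fin n) (Fin n) ℝ) : Fin m → ℝ := fun i => finner (A i) M

/-- Matrix representation `𝐀 ∈ ℝ^{m×n²}` of `𝒜`, satisfying `𝐀 ⬝ vec M = 𝒜(M)`. -/
def bigA {n m : ℕ} (A : Fin m → Matrix (Fin n) (Fin n) ℝ) :
    Matrix (Fin m) (Fin (n * n)) ℝ := Matrix.of fun i k => vecSq (A i) k

/-- `𝒜` satisfies the `(δ, g)`-RIP property. -/
def RIP {n m : ℕ} (A : Fin m → Matrix (Fin n) (Fin n) ℝ) (δ : ℝ) (g : ℕ) : Prop :=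
  ∀ M : Matrix (Fin n) (Fin n) ℝ, M.rank ≤ g →
    (1 - δ) * fnorm M ^ 2 ≤ _root_.enorm (calA A M) ^ 2 ∧
      _root_.enorm (calA A M) ^ 2 ≤ (1 + δ) * fnorm M ^ 2

/-- The matrix `𝐗̂ ∈ ℝ^{n² × nr}` satisfying `𝐗̂ ⬝ vec U = vec (X̂Uᵀ + UX̂ᵀ)`. -/
def bigX {n r : ℕ} (X : Matrix (Fin n) (Fin r) ℝ) :
    Matrix (Fin (n * n)) (Fin (n * r)) ℝ :=
  Matrix.of fun k l =>
    (if (finProdFinEquiv.symm k).2 = (finProdFinEquiv.symm l).1 then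
      X (finProdFinEquiv.symm k).1 (finProdFinEquiv.symm l).2 else 0) +
    (if (finProdFinEquiv.symm k).1 = (finProdFinEquiv.symm l).1 then
      X (finProdFinEquiv.symm k).2 (finProdFinEquiv.symm l).2 else 0)

/-- The Kronecker product `I_r ⊗ G`, realized as an operator on vectorized
`n × r` matrices (it sends `vec U` to `vec (G * U)`). -/
def kronIdR {n : ℕ} (r : ℕ) (G : Matrix (Fin n) (Fin n) ℝ) :
    Matrix (Fin (n * r)) (Fin (n * r)) ℝ :=
  Matrix.of fun k l =>
    if (finProdFinEquiv.symm k).2 = (finProdFinEquiv.symm l).2 then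
      G (finProdFinEquiv.symm k).1 (finProdFinEquiv.symm l).1 else 0

/-- Loewner order: `A ⪯ B` iff `B - A` is positive semidefinite. -/
def PSDle {k : ℕ} (A B : Matrix (Fin k) (Fin k) ℝ) : Prop := (B - A).PosSemidef

/-- The objective `f(X) = ½‖𝒜(XXᵀ) − b + w‖²` with `b = 𝒜(M*)`. -/
def fobj {n m r : ℕ} (A : Fin m → Matrix (Fin n) (Fin n) ℝ)
    (Mstar : Matrix (Fin n) (Fin n) ℝ) (w : Fin m → ℝ)
    (X : Matrix (Fin n) (Fin r) ℝ) : ℝ :=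
  (1 / 2) * _root_.enorm (fun i => calA A (X * Xᵀ) i - calA A Mstar i + w i) ^ 2

/-- View a point of Euclidean space as an `n × r` matrix. -/
def toMat {n r : ℕ} (x : EuclideanSpace ℝ (Fin n × Fin r)) : Matrix (Fin n) (Fin r) ℝ :=
  Matrix.of fun i j => x (i, j)

/-- View an `n × r` matrix as a point of Euclidean space (whose inner product is
the Frobenius inner product). -/
def vecE {n r : ℕ} (X : Matrix (Fin n) (Fin r) ℝ) : EuclideanSpace ℝ (Fin n × Fin r) :=
  WithLp.toLp 2 (fun p : Fin n × Fin r => X p.1 p.2)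

/-- The objective as a function on Euclidean space. -/
def fE {n m : ℕ} (r : ℕ) (A : Fin m → Matrix (Fin n) (Fin n) ℝ)
    (Mstar : Matrix (Fin n) (Fin n) ℝ) (w : Fin m → ℝ) :
    EuclideanSpace ℝ (Fin n × Fin r) → ℝ :=
  fun x => fobj A Mstar w (toMat x)

/-- Hessian quadratic form `D²f(X)[U, U]` (second Fréchet derivative). -/
def hessQF {n m : ℕ} (r : ℕ) (A : Fin m → Matrix (Fin n) (Fin n) ℝ)
    (Mstar : Matrix (Fin n) (Fin n) ℝ) (w : Fin m → ℝ)
    (X U : Matrix (Fin n) (Fin r) ℝ) : ℝ :=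
  iteratedFDeriv ℝ 2 (fE r A Mstar w) (vecE X) ![vecE U, vecE U]

/-- Gradient `∇f(X)` with respect to the Frobenius inner product, as a matrix. -/
def gradf {n m : ℕ} (r : ℕ) (A : Fin m → Matrix (Fin n) (Fin n) ℝ)
    (Mstar : Matrix (Fin n) (Fin n) ℝ) (w : Fin m → ℝ)
    (X : Matrix (Fin n) (Fin r) ℝ) : Matrix (Fin n) (Fin r) ℝ :=
  toMat (gradient (fE r A Mstar w) (vecE X))

/-
Split the rows into the blocks `r` and `n - r`. Then `X̂X̂ᵀ - M*` has blocks
`X₁X₁ᵀ - Z₁Z₁ᵀ, -Z₁Z₂ᵀ, -Z₂Z₁ᵀ, -Z₂Z₂ᵀ`, so the denominator is `‖X̂X̂ᵀ - M*‖_F²`.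
As `M* ⪰ 0` has rank `r*`, its nonzero eigenvalues are at least `λ = λ_{r*}(M*)`, hence
`M*² ⪰ λ M*`; the trace of the bottom-right block gives
`λ tr(Z₂Z₂ᵀ) ≤ ‖Z₁Z₂ᵀ‖_F² + ‖Z₂Z₂ᵀ‖_F²`. Combined with `‖Z₂Z₂ᵀ‖_F ≤ tr(Z₂Z₂ᵀ)` and
`‖Z₂Z₂ᵀ‖_F ≤ ‖X̂X̂ᵀ - M*‖_F ≤ τλ` this yields `‖Z₂Z₂ᵀ‖_F² ≤ τ (‖Z₁Z₂ᵀ‖_F² + ‖Z₂Z₂ᵀ‖_F²)`,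
which rearranges to the bound.
-/

attribute [local instance] Matrix.frobeniusNormedAddCommGroup

section Frobenius

variable {l m n o : Type*} [Fintype l] [Fintype m] [Fintype n] [Fintype o]

lemma frobenius_norm_sq_eq_sum (A : Matrix m n ℝ) : ‖A‖ ^ 2 = ∑ i, ∑ j, A i j ^ 2 := by
  rw [frobenius_norm_def, ← Real.rpow_natCast, ← Real.rpow_mul (by positivity)]
  norm_num [Real.rpow_two]

lemma fnorm_eq_frobenius_norm {a b : ℕ} (A : Matrix (Fin a) (Fin b) ℝ) : fnorm A = ‖A‖ := by
  rw [fnorm, ← frobenius_norm_sq_eq_sum, Real.sqrt_sq (norm_nonneg _)]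

lemma frobenius_norm_submatrix_equiv (A : Matrix m n ℝ) (e : l ≃ m) (f : o ≃ n) :
    ‖A.submatrix e f‖ = ‖A‖ := by
  rw [frobenius_norm_def, frobenius_norm_def]
  exact congrArg (· ^ (1 / 2 : ℝ)) (Fintype.sum_equiv e _ _ fun i =>
    Fintype.sum_equiv f _ _ fun j => rfl)

lemma frobenius_norm_fromBlocks_sq (A : Matrix l n ℝ) (B : Matrix l o ℝ) (C : Matrix m n ℝ)
    (D : Matrix m o ℝ) :
    ‖fromBlocks A B C D‖ ^ 2 = ‖A‖ ^ 2 + ‖B‖ ^ 2 + ‖C‖ ^ 2 + ‖D‖ ^ 2 := by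
  simp only [frobenius_norm_sq_eq_sum, Fintype.sum_sum_type, fromBlocks_apply₁₁,
    fromBlocks_apply₁₂, fromBlocks_apply₂₁, fromBlocks_apply₂₂, Finset.sum_add_distrib]
  ring

lemma frobenius_norm_sq_eq_trace (A : Matrix m n ℝ) : ‖A‖ ^ 2 = trace (A * Aᵀ) := by
  rw [frobenius_norm_sq_eq_sum]
  simp [trace, mul_apply, sq]

lemma frobenius_norm_mul_transpose_le (A : Matrix m n ℝ) : ‖A * Aᵀ‖ ≤ trace (A * Aᵀ) := by
  simpa [← frobenius_norm_sq_eq_trace, sq] using frobenius_norm_mul A Aᵀ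

lemma frobenius_norm_sq_gram_sub_gram (X₁ : Matrix l o ℝ) (Z₁ : Matrix l n ℝ)
    (Z₂ : Matrix m n ℝ) :
    ‖fromRows X₁ 0 * (fromRows X₁ 0)ᵀ - fromRows Z₁ Z₂ * (fromRows Z₁ Z₂)ᵀ‖ ^ 2 =
      ‖Z₁ * Z₁ᵀ - X₁ * X₁ᵀ‖ ^ 2 + 2 * ‖Z₁ * Z₂ᵀ‖ ^ 2 + ‖Z₂ * Z₂ᵀ‖ ^ 2 := by
  have hZ₂₁ : Z₂ * Z₁ᵀ = (Z₁ * Z₂ᵀ)ᵀ := by rw [transpose_mul, transpose_transpose]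
  simp only [transpose_fromRows, fromRows_mul_fromCols, transpose_zero, Matrix.zero_mul,
    Matrix.mul_zero, sub_eq_add_neg, fromBlocks_neg, fromBlocks_add, zero_add,
    frobenius_norm_fromBlocks_sq, norm_neg, hZ₂₁, frobenius_norm_transpose]
  rw [← sub_eq_add_neg, ← sub_eq_add_neg, norm_sub_rev]
  ring

lemma mul_trace_le_of_posSemidef_gram_mul_self_sub (Z₁ : Matrix l n ℝ) (Z₂ : Matrix m n ℝ)
    (c : ℝ)
    (h : (fromRows Z₁ Z₂ * (fromRows Z₁ Z₂)ᵀ * (fromRows Z₁ Z₂ * (fromRows Z₁ Z₂)ᵀ) -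
      c • (fromRows Z₁ Z₂ * (fromRows Z₁ Z₂)ᵀ)).PosSemidef) :
    c * trace (Z₂ * Z₂ᵀ) ≤ ‖Z₁ * Z₂ᵀ‖ ^ 2 + ‖Z₂ * Z₂ᵀ‖ ^ 2 := by
  have hZ₂₁ : Z₂ * Z₁ᵀ = (Z₁ * Z₂ᵀ)ᵀ := by rw [transpose_mul, transpose_transpose]
  have hsymm : (Z₂ * Z₂ᵀ)ᵀ = Z₂ * Z₂ᵀ := by rw [transpose_mul, transpose_transpose]
  have h₂₂ : (toBlocks₂₂ _).PosSemidef := h.submatrix Sum.inr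
  simp only [transpose_fromRows, fromRows_mul_fromCols, fromBlocks_multiply, fromBlocks_smul,
    sub_eq_add_neg, fromBlocks_neg, fromBlocks_add, toBlocks_fromBlocks₂₂] at h₂₂
  have htr := h₂₂.trace_nonneg
  rw [trace_add, trace_add, trace_neg, trace_smul, smul_eq_mul, hZ₂₁, trace_mul_comm,
    ← frobenius_norm_sq_eq_trace] at htr
  rw [frobenius_norm_sq_eq_trace (Z₂ * Z₂ᵀ), hsymm]
  linarith

end Frobenius

open scoped MatrixOrder in
lemma Matrix.IsHermitian.posSemidef_mul_self_sub_smul {n : Type*} [Fintype n] [DecidableEq n]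
    {M : Matrix n n ℝ} (hM : M.IsHermitian) {c : ℝ}
    (hc : ∀ i, 0 ≤ hM.eigenvalues i * (hM.eigenvalues i - c)) :
    (M * M - c • M).PosSemidef := by
  have hcfc : M * M - c • M = cfc (fun x => x * (x - c)) M := by
    rw [cfc_mul (fun x => x) (fun x => x - c) M, cfc_sub (fun x => x) (fun _ => c) M, cfc_id' ℝ M,
      cfc_const c M, mul_sub, Algebra.algebraMap_eq_smul_one, mul_smul_one]
  rw [hcfc, ← nonneg_iff_posSemidef]
  refine cfc_nonneg fun x hx => ?_
  obtain ⟨i, rfl⟩ := hM.spectrum_real_eq_range_eigenvalues ▸ hx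
  exact hc i

lemma Matrix.PosSemidef.eigval_le_eigenvalues {k ρ : ℕ} {M : Matrix (Fin k) (Fin k) ℝ}
    (hM : M.PosSemidef) (hrk : M.rank = ρ) (hρ : ρ - 1 < k) {i : Fin k}
    (hi : hM.isHermitian.eigenvalues i ≠ 0) :
    eigval M ⟨ρ - 1, hρ⟩ ≤ hM.isHermitian.eigenvalues i := by
  classical
  set μ := hM.isHermitian.eigenvalues
  set σ := Tuple.sort μ
  have hmono : Monotone (μ ∘ σ) := Tuple.monotone_sort μ
  set j := σ.symm i
  have hj : μ (σ j) = μ i := by simp [j]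
  have hpos : 0 < μ i := (hM.eigenvalues_nonneg i).lt_of_ne' hi
  -- the sorted eigenvalues from position `j` on are all positive, and only `ρ` are nonzero
  have hIci : Finset.Ici j ⊆ Finset.univ.filter fun l => μ (σ l) ≠ 0 := fun l hl =>
    Finset.mem_filter.2 ⟨Finset.mem_univ l,
      (hpos.trans_le (hj ▸ hmono (Finset.mem_Ici.1 hl))).ne'⟩
  have hcard : Fintype.card {l // μ (σ l) ≠ 0} = ρ := by
    rw [← hrk, hM.isHermitian.rank_eq_card_non_zero_eigs]
    exact Fintype.card_congr (σ.subtypeEquiv fun _ => Iff.rfl)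
  have hj_ge : k - j ≤ ρ := by
    simpa [← hcard, Fintype.card_subtype] using Finset.card_le_card hIci
  rw [eigval, dif_pos hM.isHermitian, ← hj]
  refine hmono (Fin.mk_le_of_le_val ?_)
  dsimp only
  omega

lemma Matrix.PosSemidef.posSemidef_mul_self_sub_eigval_smul {k ρ : ℕ}
    {M : Matrix (Fin k) (Fin k) ℝ} (hM : M.PosSemidef) (hrk : M.rank = ρ) (hρ : ρ - 1 < k) :
    (M * M - eigval M ⟨ρ - 1, hρ⟩ • M).PosSemidef := by
  refine hM.isHermitian.posSemidef_mul_self_sub_smul fun i => ?_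
  rcases eq_or_ne (hM.isHermitian.eigenvalues i) 0 with hi | hi
  · simp [hi]
  · exact mul_nonneg (hM.eigenvalues_nonneg i)
      (sub_nonneg.2 (hM.eigval_le_eigenvalues hrk hρ hi))

lemma Matrix.submatrix_mul_transpose_eq {m m' k l R : Type*} [Fintype k] [Fintype l]
    [CommSemiring R] (A : Matrix m l R) (e : m' → m) {f : k → l} (hf : Function.Injective f)
    (hA : ∀ i j, j ∉ Set.range f → A i j = 0) :
    (A * Aᵀ).submatrix e e = A.submatrix e f * (A.submatrix e f)ᵀ := by
  ext i j
  simp only [submatrix_apply, mul_apply, transpose_apply]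
  refine (Finset.sum_of_injOn f hf.injOn (fun _ _ => Finset.mem_coe.2 (Finset.mem_univ _))
    (fun x _ hx => ?_) fun _ _ => rfl).symm
  rw [hA _ x (by simpa using hx), zero_mul]

lemma sq_div_le_div_two_sub {τ lam a b c d t : ℝ} (hτ : 0 ≤ τ) (hτ2 : τ < 2) (ha : 0 ≤ a)
    (hb : 0 ≤ b) (hc : 0 ≤ c) (hd : 0 ≤ d) (hd2 : d ^ 2 = c + 2 * b + a ^ 2) (hloc : d ≤ τ * lam)
    (hlam : lam * t ≤ b + a ^ 2) (hat : a ≤ t) :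
    a ^ 2 / (c + 2 * b + a ^ 2) ≤ τ / (2 - τ) := by
  have had : a ≤ d := by nlinarith
  have key : a ^ 2 ≤ τ * (b + a ^ 2) := calc
    a ^ 2 ≤ d * a := by nlinarith
    _ ≤ τ * lam * a := mul_le_mul_of_nonneg_right hloc ha
    _ ≤ τ * lam * t := mul_le_mul_of_nonneg_left hat (hd.trans hloc)
    _ ≤ τ * (b + a ^ 2) := by rw [mul_assoc]; exact mul_le_mul_of_nonneg_left hlam hτ
  refine div_le_of_le_mul₀ (by nlinarith) (div_nonneg hτ (by linarith)) ?_
  rw [div_mul_eq_mul_div, le_div_iff₀ (by linarith)]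
  nlinarith [mul_nonneg hτ hc]

lemma div_two_sub_le_self {τ : ℝ} (hτ0 : 0 ≤ τ) (hτ1 : τ ≤ 1) : τ / (2 - τ) ≤ τ := by
  rw [div_le_iff₀ (by linarith)]
  nlinarith

/-- angle bound (34) in the proof of Theorem 4. -/
theorem statement12
    (n r rs : ℕ) (hrrs : rs ≤ r) (hrn : r < n)
    (τ : ℝ) (hτ0 : 0 < τ) (hτ1 : τ < 1)
    (X1 : Matrix (Fin r) (Fin r) ℝ)
    (Z1 : Matrix (Fin r) (Fin rs) ℝ) (Z2 : Matrix (Fin (n - r)) (Fin rs) ℝ)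
    (Xhat Z : Matrix (Fin n) (Fin r) ℝ)
    (hX : ∀ (i : Fin n) (j : Fin r),
      Xhat i j = if h : (i : ℕ) < r then X1 ⟨i, h⟩ j else 0)
    (hZ : ∀ (i : Fin n) (j : Fin r),
      Z i j = if hj : (j : ℕ) < rs then
          (if hi : (i : ℕ) < r then Z1 ⟨i, hi⟩ ⟨j, hj⟩
            else Z2 ⟨(i : ℕ) - r, by have := i.isLt; omega⟩ ⟨j, hj⟩)
        else 0)
    (hrank : (Z * Zᵀ).rank = rs)
    (hloc : fnorm (Xhat * Xhatᵀ - Z * Zᵀ) ≤ τ * eigval (Z * Zᵀ) ⟨rs - 1, by omega⟩) :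
    fnorm (Z2 * Z2ᵀ) ^ 2 /
        (fnorm (Z1 * Z1ᵀ - X1 * X1ᵀ) ^ 2 + 2 * fnorm (Z1 * Z2ᵀ) ^ 2 +
          fnorm (Z2 * Z2ᵀ) ^ 2) ≤ τ / (2 - τ) ∧
    τ / (2 - τ) ≤ τ := by
  set e : Fin r ⊕ Fin (n - r) ≃ Fin n := finSumFinEquiv.trans (finCongr (by omega))
  have hXe : Xhat.submatrix e id = fromRows X1 0 := by
    ext (i | i) j <;> simp [e, hX]
  have hZe : Z.submatrix e (Fin.castLE hrrs) = fromRows Z1 Z2 := by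
    ext (i | i) j <;> simp [e, hZ]
  have hXX : (Xhat * Xhatᵀ).submatrix e e = fromRows X1 0 * (fromRows X1 0)ᵀ := by
    rw [Xhat.submatrix_mul_transpose_eq e Function.injective_id (by simp), hXe]
  have hZZ : (Z * Zᵀ).submatrix e e = fromRows Z1 Z2 * (fromRows Z1 Z2)ᵀ := by
    refine (Z.submatrix_mul_transpose_eq e (Fin.castLE_injective hrrs) fun i j hj => ?_).trans
      (by rw [hZe])
    rw [hZ, dif_neg fun hj' => hj ⟨⟨j, hj'⟩, rfl⟩]
  set lam := eigval (Z * Zᵀ) ⟨rs - 1, by omega⟩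
  have hpsd : (Z * Zᵀ * (Z * Zᵀ) - lam • (Z * Zᵀ)).PosSemidef := by
    have hM : (Z * Zᵀ).PosSemidef := by
      simpa only [conjTranspose_eq_transpose_of_trivial] using posSemidef_self_mul_conjTranspose Z
    exact hM.posSemidef_mul_self_sub_eigval_smul hrank _
  have htrace : lam * trace (Z2 * Z2ᵀ) ≤ ‖Z1 * Z2ᵀ‖ ^ 2 + ‖Z2 * Z2ᵀ‖ ^ 2 := by
    refine mul_trace_le_of_posSemidef_gram_mul_self_sub Z1 Z2 lam ?_
    simpa only [submatrix_sub, submatrix_smul, Pi.sub_apply, Pi.smul_apply,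
      ← submatrix_mul_equiv _ _ _ e, hZZ] using hpsd.submatrix e
  have hnorm : ‖Xhat * Xhatᵀ - Z * Zᵀ‖ ^ 2 =
      ‖Z1 * Z1ᵀ - X1 * X1ᵀ‖ ^ 2 + 2 * ‖Z1 * Z2ᵀ‖ ^ 2 + ‖Z2 * Z2ᵀ‖ ^ 2 := by
    rw [← frobenius_norm_submatrix_equiv _ e e, submatrix_sub, Pi.sub_apply, Pi.sub_apply,
      hXX, hZZ, frobenius_norm_sq_gram_sub_gram]
  simp only [fnorm_eq_frobenius_norm] at hloc ⊢
  exact ⟨sq_div_le_div_two_sub hτ0.le (by linarith) (norm_nonneg _) (by positivity)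
    (by positivity) (norm_nonneg _) hnorm hloc htrace (frobenius_norm_mul_transpose_le Z2),
    div_two_sub_le_self hτ0.le hτ1.le⟩
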